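/- For every integer ℓ ≥ 1, let Q = v₁…v_q be an induced path of G_ℓ such that no source of B_ℓ is Q-special. Then Q is bimonotone: there exists k ∈ {1,…,q} such that depth(v_k) ≤ depth(v_{k−1}) ≤ … ≤ depth(v₁) and depth(v_k) ≤ depth(v_{k+1}) ≤ … ≤ depth(v_q). -/
import Mathlib


namespace PaperDefs

/-- `v : Fin n → V` is a path of order `n` in `G`: distinct vertices,
consecutive ones adjacent. -/
def IsPathSeq {V : Type*} (G : SimpleGraph V) {n : ℕ} (v : Fin n → V) : Prop :=
  Function.Injective v ∧ ∀ i j : Fin n, (j : ℕ) = (i : ℕ) + 1 → G.Adj (v i) (v j)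

/-- `v : Fin n → V` is an induced path of order `n` in `G`: a path with no
edge between vertices at distance ≥ 2 along the path. -/
def IsInducedPathSeq {V : Type*} (G : SimpleGraph V) {n : ℕ} (v : Fin n → V) : Prop :=
  IsPathSeq G v ∧ ∀ i j : Fin n, (i : ℕ) + 1 < (j : ℕ) → ¬ G.Adj (v i) (v j)

/-- `G` is `k`-degenerate: every nonempty (induced) subgraph has a vertex of
degree at most `k`. -/
def KDeg {V : Type*} (G : SimpleGraph V) (k : ℕ) : Prop :=
  ∀ s : Set V, s.Nonempty → ∃ v ∈ s, {u | u ∈ s ∧ G.Adj v u}.ncard ≤ k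

/-- `G` has a Hamiltonian path. -/
def HamPath {V : Type*} [Fintype V] (G : SimpleGraph V) : Prop :=
  ∃ v : Fin (Fintype.card V) → V, Function.Bijective v ∧
    ∀ i j : Fin (Fintype.card V), (j : ℕ) = (i : ℕ) + 1 → G.Adj (v i) (v j)

/-- `y` is `r`-reachable from `x` w.r.t. the vertex ordering given by the
injection `f : V → ℕ`. -/
def RReach {V : Type*} (G : SimpleGraph V) (f : V → ℕ) (r : ℕ) (x y : V) : Prop :=
  f y < f x ∧ ∃ w : G.Walk x y, w.IsPath ∧ w.length ≤ r ∧
    ∀ z ∈ w.support, z ≠ x → z ≠ y → f x < f z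

/-- `col_r(G) ≤ k`: some linear order on the vertices witnesses that at most `k`
vertices are `r`-reachable from every vertex. -/
def ColAtMost {V : Type*} (G : SimpleGraph V) (r k : ℕ) : Prop :=
  ∃ f : V → ℕ, Function.Injective f ∧ ∀ x : V, {y | RReach G f r x y}.ncard ≤ k

end PaperDefs
namespace PaperDefs

/-- The function `h` with `h 1 = 3` and `h (ℓ+1) = 2 + 2 * h ℓ`
(equivalently `h ℓ = 5·2^(ℓ-1) - 2` for `ℓ ≥ 1`). -/
def h : ℕ → ℕ
  | 0 => 0
  | 1 => 3
  | n + 2 => 2 + 2 * h (n + 1)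

/-- Shift a set of pairs of integers by `i`. -/
def shift (X : Set (ℕ × ℕ)) (i : ℕ) : Set (ℕ × ℕ) := (fun q => (q.1 + i, q.2 + i)) '' X

/-- The nested interval system `N_ℓ`. -/
def Nset : ℕ → Set (ℕ × ℕ)
  | 0 => ∅
  | 1 => {(1, 3)}
  | ℓ + 2 => {(1, h (ℓ + 2))} ∪ shift (Nset (ℓ + 1)) 1 ∪ shift (Nset (ℓ + 1)) (h (ℓ + 1) + 1)

/-- Nodes of the complete binary tree of depth `p`, heap-indexed by
`1, …, 2^p - 1` (node `i` has children `2i` and `2i+1`). -/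
def isNode (p i : ℕ) : Prop := 1 ≤ i ∧ i < 2 ^ p

/-- Adjacency in the complete binary tree of depth `p` (heap indexing). -/
def treeAdj (p s t : ℕ) : Prop := isNode p s ∧ isNode p t ∧ (s = t / 2 ∨ t = s / 2)

/-- The depth of node `i` (the root `1` has depth `1`). -/
def nodeDepth (i : ℕ) : ℕ := Nat.log 2 i + 1

/-- `s ⪯ t` : `s` is an ancestor of `t` (heap indexing). -/
def anc (s t : ℕ) : Prop := ∃ k, t / 2 ^ k = s

/-- `s ≺ t` : `s` is a strict ancestor of `t` (heap indexing). -/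
def strictAnc (s t : ℕ) : Prop := ∃ k, 1 ≤ k ∧ t / 2 ^ k = s

/-- The nodes of the complete binary tree of depth `p`. -/
abbrev TNode (p : ℕ) := {i : Fin (2 ^ p) // 1 ≤ (i : ℕ)}

/-- The non-root nodes of the complete binary tree of depth `p`. -/
abbrev NRNode (p : ℕ) := {i : Fin (2 ^ p) // 2 ≤ (i : ℕ)}

/-- Vertices of a blow-up of the complete binary tree of depth `p`:
for every node `s` a clique `K^s` on 3 vertices (`Sum.inl (s, i)`),
and for every non-root node `t` the four subdivision vertices
`pred t = {x₁, y₁, x₂, y₂}` (`Sum.inr (t, j)` with `j = 0, 1, 2, 3`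
standing for `x₁, y₁, x₂, y₂`; so `tpred t = {0, 2}` and `bpred t = {1, 3}`). -/
abbrev BV (p : ℕ) := (TNode p × Fin 3) ⊕ (NRNode p × Fin 4)

/-- The projection `π` mapping a vertex of the blow-up to (the heap index of)
the node of the tree it originates from. -/
def πn {p : ℕ} : BV p → ℕ
  | Sum.inl (s, _) => (s.1 : ℕ)
  | Sum.inr (t, _) => (t.1 : ℕ)

/-- The depth of a vertex of the blow-up. -/
def vDepth {p : ℕ} (u : BV p) : ℕ := nodeDepth (πn u)

/-- Edges of the triangle `K^s` (on vertex set `Fin 3`) are identified with the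
vertex they miss; `other k b` enumerates (as `b` ranges over `Bool`) the two
endpoints of the edge `k`. -/
def other (k : Fin 3) (b : Bool) : Fin 3 := k + (if b then 1 else 2)

/-- The arbitrary choices made when constructing a blow-up of the complete binary
tree of depth `p`: the injections `μ_s` from the neighbors of `s` to the edges of
`K^s` (an edge of `K^s` being encoded by the vertex of `Fin 3` it misses), the
choices `ε` of labelings of the endpoints of the edges `μ_s t`, and the top (root)
edge of the root clique, which must be outside the image of `μ` at the root. -/
structure BUChoices (p : ℕ) where
  μ : ℕ → ℕ → Fin 3
  ε : ℕ → ℕ → Bool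
  rootTop : Fin 3
  μ_inj : ∀ s t t', treeAdj p s t → treeAdj p s t' → μ s t = μ s t' → t = t'
  rootTop_spec : ∀ t, treeAdj p 1 t → μ 1 t ≠ rootTop

/-- The (encoding of the) top edge of the clique `K^s`. -/
def topIdx {p : ℕ} (C : BUChoices p) (s : ℕ) : Fin 3 :=
  if s = 1 then C.rootTop else C.μ s (s / 2)

/-- The base relation of the blow-up: clique edges inside each `K^s`, and for every
non-root node `t` with parent `s` the two paths
`L(s,t) = u₁ x₁ y₁ v₁` and `R(s,t) = u₂ x₂ y₂ v₂`, where `u₁, u₂` are the endpoints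
of `μ_s t` and `v₁, v₂` those of `μ_t s` (as labeled by `ε`). -/
def buRel {p : ℕ} (C : BUChoices p) : BV p → BV p → Prop
  | Sum.inl (s, i), Sum.inl (s', j) => s = s' ∧ i ≠ j
  | Sum.inl (s, i), Sum.inr (t, j) =>
      ((s.1 : ℕ) = (t.1 : ℕ) / 2 ∧
        ((j = 0 ∧ i = other (C.μ (s.1 : ℕ) (t.1 : ℕ)) (C.ε (s.1 : ℕ) (t.1 : ℕ))) ∨
         (j = 2 ∧ i = other (C.μ (s.1 : ℕ) (t.1 : ℕ)) (! C.ε (s.1 : ℕ) (t.1 : ℕ))))) ∨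
      ((s.1 : ℕ) = (t.1 : ℕ) ∧
        ((j = 1 ∧ i = other (C.μ (t.1 : ℕ) ((t.1 : ℕ) / 2)) (C.ε (t.1 : ℕ) ((t.1 : ℕ) / 2))) ∨
         (j = 3 ∧ i = other (C.μ (t.1 : ℕ) ((t.1 : ℕ) / 2)) (! C.ε (t.1 : ℕ) ((t.1 : ℕ) / 2)))))
  | Sum.inr (t, j), Sum.inr (t', j') => t = t' ∧ ((j = 0 ∧ j' = 1) ∨ (j = 2 ∧ j' = 3))
  | Sum.inr _, Sum.inl _ => False

/-- The blow-up of the complete binary tree of depth `p`, for the choices `C`. -/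
def blowup {p : ℕ} (C : BUChoices p) : SimpleGraph (BV p) := SimpleGraph.fromRel (buRel C)

/-- A vertex incident with the root edge of the blow-up. -/
def isRootEnd {p : ℕ} (C : BUChoices p) (u : BV p) : Prop :=
  ∃ s x, u = Sum.inl (s, x) ∧ (s.1 : ℕ) = 1 ∧ x ≠ C.rootTop

/-- The arbitrary choices made when constructing `G_ℓ`: those of the underlying
blow-up of `B_ℓ` (the complete binary tree of depth `h ℓ`) together with, for every
pair `s ≺ t`, the labeling `ρ` of the endpoints `u₁, u₂` of the top edge of `K^s`
used for the ribs towards `pred t`. -/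
structure GChoices (ℓ : ℕ) extends BUChoices (h ℓ) where
  ρ : ℕ → ℕ → Bool

/-- The rib edges: for `s ≺ t` with `(depth s, depth t) ∈ N_ℓ`, the edges
`u₁x₁, u₁x₂, u₂y₁, u₂y₂` where `u₁u₂` is the top edge of `K^s`. -/
def ribRel {ℓ : ℕ} (C : GChoices ℓ) : BV (h ℓ) → BV (h ℓ) → Prop
  | Sum.inl (s, i), Sum.inr (t, j) =>
      strictAnc (s.1 : ℕ) (t.1 : ℕ) ∧ (nodeDepth (s.1 : ℕ), nodeDepth (t.1 : ℕ)) ∈ Nset ℓ ∧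
      (((j = 0 ∨ j = 2) ∧ i = other (topIdx C.toBUChoices (s.1 : ℕ)) (C.ρ (s.1 : ℕ) (t.1 : ℕ))) ∨
       ((j = 1 ∨ j = 3) ∧ i = other (topIdx C.toBUChoices (s.1 : ℕ)) (! C.ρ (s.1 : ℕ) (t.1 : ℕ))))
  | _, _ => False

/-- The graph `G_ℓ`: the blow-up `H_ℓ` of `B_ℓ` together with the ribs. -/
def Gl {ℓ : ℕ} (C : GChoices ℓ) : SimpleGraph (BV (h ℓ)) :=
  SimpleGraph.fromRel (fun u v => buRel C.toBUChoices u v ∨ ribRel C u v)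

/-- `s` is a source of `B_ℓ` of rank `a`. -/
def IsSourceOfRank (ℓ s a : ℕ) : Prop :=
  isNode (h ℓ) s ∧ 1 ≤ a ∧ a ≤ ℓ ∧ (nodeDepth s, nodeDepth s + h a - 1) ∈ Nset ℓ

/-- `s` is a source of `B_ℓ`. -/
def IsSource (ℓ s : ℕ) : Prop := isNode (h ℓ) s ∧ ∃ j, (nodeDepth s, j) ∈ Nset ℓ

/-- `t` is an internal node of `B_ℓ(s)`, for `s` a source of rank `a`. -/
def InternalNode (ℓ s a t : ℕ) : Prop :=
  strictAnc s t ∧ nodeDepth t < nodeDepth s + h a - 1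

/-- `t` is a node of the subtree `B_ℓ(s)`, for `s` a source of rank `a`. -/
def SubtreeNode (ℓ s a t : ℕ) : Prop :=
  anc s t ∧ nodeDepth t ≤ nodeDepth s + h a - 1

/-- The set of ranks of sources `s` such that `t` is an internal node of `B_ℓ(s)`. -/
def tauSet (ℓ t : ℕ) : Set ℕ := {a | ∃ s, IsSourceOfRank ℓ s a ∧ InternalNode ℓ s a t}

/-- `τ(u)`: the minimum rank of a source `s` such that `π(u)` is an internal node of
`B_ℓ(s)`, and `ℓ + 1` if there is no such source. -/
noncomputable def tau (ℓ : ℕ) (u : BV (h ℓ)) : ℕ := by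
  classical
  exact if (tauSet ℓ (πn u)).Nonempty then sInf (tauSet ℓ (πn u)) else ℓ + 1

/-- `u` is a vertex incident with the top edge of the clique `K^s`. -/
def TopEdgeVert {ℓ : ℕ} (C : GChoices ℓ) (s : ℕ) (u : BV (h ℓ)) : Prop :=
  ∃ sn x, u = Sum.inl (sn, x) ∧ (sn.1 : ℕ) = s ∧ x ≠ topIdx C.toBUChoices s

/-- `u ∈ pred s`. -/
def InPred {p : ℕ} (s : ℕ) (u : BV p) : Prop := ∃ t j, u = Sum.inr (t, j) ∧ (t.1 : ℕ) = s

/-- `u` and `w` lie in a common clique `K^s`. -/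
def CliquePair {p : ℕ} (u w : BV p) : Prop :=
  ∃ s i j, u = Sum.inl (s, i) ∧ w = Sum.inl (s, j)

/-- `uw` is a tree edge of `G_ℓ`: an edge of the blow-up `H_ℓ` that is not a
clique edge. -/
def IsTreeEdge {ℓ : ℕ} (C : GChoices ℓ) (u w : BV (h ℓ)) : Prop :=
  (blowup C.toBUChoices).Adj u w ∧ ¬ CliquePair u w

/-- The source `s` is `Q`-special for the induced path `Q = v`. -/
def QSpecial {ℓ q : ℕ} (C : GChoices ℓ) (v : Fin q → BV (h ℓ)) (s : ℕ) : Prop :=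
  ∃ a, IsSourceOfRank ℓ s a ∧ (∃ i, TopEdgeVert C s (v i)) ∧
    ∃ j, InternalNode ℓ s a (πn (v j))

end PaperDefs
namespace PaperDefs

section Aux

lemma three_le_h : ∀ a, 1 ≤ a → 3 ≤ h a
  | 1, _ => by simp [h]
  | (n+2), _ => by
      have := three_le_h (n+1) (by omega)
      simp only [h]; omega

lemma nset_rank : ∀ ℓ (p : ℕ × ℕ), p ∈ Nset ℓ →
    ∃ a, 1 ≤ a ∧ a ≤ ℓ ∧ 3 ≤ h a ∧ p.2 = p.1 + h a - 1
  | 0, p => by simp [Nset]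
  | 1, p => by
      intro hp
      simp only [Nset, Set.mem_singleton_iff] at hp
      exact ⟨1, le_refl _, le_refl _, by simp [h], by simp [hp, h]⟩
  | (n+2), p => by
      intro hp
      simp only [Nset, Set.mem_union] at hp
      rcases hp with (hp | hp) | hp
      · simp only [Set.mem_singleton_iff] at hp
        refine ⟨n+2, by omega, le_refl _, three_le_h _ (by omega), ?_⟩
        have := three_le_h (n+2) (by omega)
        simp only [hp]
        have := three_le_h (n+2) (by omega)
        omega
      · obtain ⟨q, hq, rfl⟩ := hp
        obtain ⟨a, h1, h2, h3, h4⟩ := nset_rank (n+1) q hq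
        exact ⟨a, h1, by omega, h3, by simp; omega⟩
      · obtain ⟨q, hq, rfl⟩ := hp
        obtain ⟨a, h1, h2, h3, h4⟩ := nset_rank (n+1) q hq
        exact ⟨a, h1, by omega, h3, by simp; omega⟩

lemma nodeDepth_half {m : ℕ} (hm : 2 ≤ m) : nodeDepth m = nodeDepth (m / 2) + 1 := by
  have h1 : Nat.log 2 (m / 2) = Nat.log 2 m - 1 := Nat.log_div_base 2 m
  have h2 : 0 < Nat.log 2 m := Nat.log_pos (by omega) hm
  simp only [nodeDepth]; omega

lemma nodeDepth_div : ∀ (k t : ℕ), 1 ≤ t / 2 ^ k → nodeDepth t = nodeDepth (t / 2 ^ k) + k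
  | 0, t => by simp
  | (k+1), t => by
      intro ht
      have hdd : t / 2 ^ (k+1) = (t / 2 ^ k) / 2 := by
        rw [Nat.div_div_eq_div_mul, pow_succ]
      have h1 : 1 ≤ t / 2 ^ k := by
        rw [hdd] at ht; omega
      have h2 : 2 ≤ t / 2 ^ k := by
        rw [hdd] at ht
        by_contra hc
        interval_cases h : (t / 2 ^ k) <;> simp_all
      have := nodeDepth_div k t h1
      rw [this, hdd] at *
      rw [nodeDepth_half h2]; ring

lemma strictAnc_anc {s t : ℕ} (h : strictAnc s t) : anc s t := by
  obtain ⟨k, _, hk⟩ := h; exact ⟨k, hk⟩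

lemma strictAnc_depth {s t : ℕ} (h : strictAnc s t) (hs : 1 ≤ s) :
    nodeDepth s < nodeDepth t := by
  obtain ⟨k, hk1, hk⟩ := h
  have := nodeDepth_div k t (by omega)
  rw [hk] at this; omega

lemma anc_chain {s s' t : ℕ} (h : anc s t) (h' : anc s' t) (hs : 1 ≤ s) (hs' : 1 ≤ s')
    (hd : nodeDepth s < nodeDepth s') : strictAnc s s' := by
  obtain ⟨k, hk⟩ := h
  obtain ⟨k', hk'⟩ := h'
  have e1 := nodeDepth_div k t (by omega)
  have e2 := nodeDepth_div k' t (by omega)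
  rw [hk] at e1; rw [hk'] at e2
  have hkk : k' < k := by omega
  refine ⟨k - k', by omega, ?_⟩
  have hkk2 : k' + (k - k') = k := by omega
  rw [← hk', Nat.div_div_eq_div_mul, ← pow_add, hkk2, hk]

lemma anc_depth_eq {s s' t : ℕ} (h : anc s t) (h' : anc s' t) (hs : 1 ≤ s) (hs' : 1 ≤ s')
    (hd : nodeDepth s = nodeDepth s') : s = s' := by
  obtain ⟨k, hk⟩ := h
  obtain ⟨k', hk'⟩ := h'
  have e1 := nodeDepth_div k t (by omega)
  have e2 := nodeDepth_div k' t (by omega)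
  rw [hk] at e1; rw [hk'] at e2
  have : k = k' := by omega
  rw [← hk, ← hk', this]

lemma other_ne (k : Fin 3) (b : Bool) : other k b ≠ k := by
  revert k b; decide

end Aux

section Graph

variable {ℓ : ℕ} (C : GChoices ℓ)

lemma flat_pi {u w : BV (h ℓ)} (hadj : (Gl C).Adj u w) (hd : vDepth u = vDepth w) :
    πn u = πn w := by
  rw [Gl, SimpleGraph.fromRel_adj] at hadj
  obtain ⟨hne, hR⟩ := hadj
  rcases u with ⟨s, i⟩ | ⟨t, j⟩ <;> rcases w with ⟨s', i'⟩ | ⟨t', j'⟩ <;>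
      simp only [buRel, ribRel, or_false, false_or] at hR <;>
      simp only [vDepth, πn] at hd ⊢
  · rcases hR with ⟨rfl, _⟩ | ⟨rfl, _⟩ <;> rfl
  · rcases hR with (⟨hpar, _⟩ | ⟨heq, _⟩) | ⟨hanc, hmem, _⟩
    · exfalso
      have := nodeDepth_half (show 2 ≤ (t'.1 : ℕ) from t'.2)
      rw [hpar] at hd; omega
    · exact heq
    · exfalso
      have := strictAnc_depth hanc s.2
      omega
  · rcases hR with (⟨hpar, _⟩ | ⟨heq, _⟩) | ⟨hanc, hmem, _⟩
    · exfalso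
      have := nodeDepth_half (show 2 ≤ (t.1 : ℕ) from t.2)
      rw [hpar] at hd; omega
    · exact heq.symm
    · exfalso
      have := strictAnc_depth hanc s'.2
      omega
  · rcases hR with ⟨rfl, _⟩ | ⟨rfl, _⟩ <;> rfl

lemma up_edge {u w : BV (h ℓ)} (hadj : (Gl C).Adj u w) (hd : vDepth u < vDepth w) :
    ∃ (sn : TNode (h ℓ)) (i : Fin 3) (tn : NRNode (h ℓ)) (j : Fin 4),
      u = Sum.inl (sn, i) ∧ w = Sum.inr (tn, j) ∧ strictAnc (sn.1 : ℕ) (tn.1 : ℕ) ∧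
      ((sn.1 : ℕ) = (tn.1 : ℕ) / 2 ∨
        ((nodeDepth (sn.1 : ℕ), nodeDepth (tn.1 : ℕ)) ∈ Nset ℓ ∧
          i ≠ topIdx C.toBUChoices (sn.1 : ℕ))) := by
  rw [Gl, SimpleGraph.fromRel_adj] at hadj
  obtain ⟨hne, hR⟩ := hadj
  rcases u with ⟨s, i⟩ | ⟨t, j⟩ <;> rcases w with ⟨s', i'⟩ | ⟨t', j'⟩ <;>
      simp only [buRel, ribRel, or_false, false_or] at hR <;>
      simp only [vDepth, πn] at hd
  · exfalso
    rcases hR with ⟨rfl, _⟩ | ⟨rfl, _⟩ <;> omega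
  · refine ⟨s, i, t', j', rfl, rfl, ?_⟩
    rcases hR with (⟨hpar, hj⟩ | ⟨heq, _⟩) | ⟨hanc, hmem, hi⟩
    · exact ⟨⟨1, le_refl _, by rw [pow_one]; exact hpar.symm⟩, Or.inl hpar⟩
    · rw [heq] at hd; omega
    · refine ⟨hanc, Or.inr ⟨hmem, ?_⟩⟩
      rcases hi with ⟨_, rfl⟩ | ⟨_, rfl⟩ <;> exact other_ne _ _
  · exfalso
    rcases hR with (⟨hpar, _⟩ | ⟨heq, _⟩) | ⟨hanc, hmem, _⟩
    · have := nodeDepth_half (show 2 ≤ (t.1 : ℕ) from t.2)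
      rw [hpar] at hd; omega
    · rw [heq] at hd; omega
    · have := strictAnc_depth hanc s'.2
      omega
  · exfalso
    rcases hR with ⟨rfl, _⟩ | ⟨rfl, _⟩ <;> omega

end Graph

section Peak

lemma no_peak {ℓ q : ℕ} (C : GChoices ℓ) (v : Fin q → BV (h ℓ))
    (hQ : IsInducedPathSeq (Gl C) v) (hS : ∀ s, ¬ QSpecial C v s)
    {a b : ℕ} (hab : a < b) (hb1 : b + 1 < q)
    (hup : vDepth (v ⟨a, by omega⟩) < vDepth (v ⟨a+1, by omega⟩))
    (hdown : vDepth (v ⟨b+1, by omega⟩) < vDepth (v ⟨b, by omega⟩))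
    (hflat : ∀ c (hca : a < c) (hcb : c < b), vDepth (v ⟨c, by omega⟩) = vDepth (v ⟨c+1, by omega⟩)) :
    False := by
  obtain ⟨⟨hinj, hadj⟩, hind⟩ := hQ
  obtain ⟨sn, i, tn, j, hu1, hu2, hanc1, hcase1⟩ :=
    up_edge C (hadj ⟨a, by omega⟩ ⟨a+1, by omega⟩ rfl) hup
  obtain ⟨sn', i', tn', j', hv1, hv2, hanc2, hcase2⟩ :=
    up_edge C ((hadj ⟨b, by omega⟩ ⟨b+1, by omega⟩ rfl).symm) hdown
  -- the flat segment stays in one node of the tree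
  have hconst : ∀ c (hc1 : a + 1 ≤ c) (hc2 : c ≤ b), πn (v ⟨c, by omega⟩) = πn (v ⟨a+1, by omega⟩) := by
    intro c hc1
    induction c, hc1 using Nat.le_induction with
    | base => intro _; rfl
    | succ n hn ih =>
      intro h2
      have hf := hflat n (by omega) (by omega)
      have hpi := flat_pi C (hadj ⟨n, by omega⟩ ⟨n+1, by omega⟩ rfl) hf
      calc πn (v ⟨n+1, by omega⟩) = πn (v ⟨n, by omega⟩) := hpi.symm
        _ = πn (v ⟨a+1, by omega⟩) := ih (by omega)
  have hpe : (tn'.1 : ℕ) = (tn.1 : ℕ) := by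
    have hc := hconst b (by omega) (le_refl b)
    simp only [hv2, hu2] at hc
    exact hc
  rw [hpe] at hanc2
  have hd1 : nodeDepth (sn.1 : ℕ) < nodeDepth (tn.1 : ℕ) := strictAnc_depth hanc1 sn.2
  have hd2 : nodeDepth (sn'.1 : ℕ) < nodeDepth (tn.1 : ℕ) := strictAnc_depth hanc2 sn'.2
  have htn2 : 2 ≤ (tn.1 : ℕ) := tn.2
  have hDpar : nodeDepth (tn.1 : ℕ) = nodeDepth ((tn.1 : ℕ) / 2) + 1 := nodeDepth_half htn2
  rcases Nat.lt_trichotomy (nodeDepth (sn.1 : ℕ)) (nodeDepth (sn'.1 : ℕ)) with hlt | heqd | hgt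
  · -- sn is a rib source, sn' an internal node of its subtree
    have hrib : (nodeDepth (sn.1 : ℕ), nodeDepth (tn.1 : ℕ)) ∈ Nset ℓ ∧
        i ≠ topIdx C.toBUChoices (sn.1 : ℕ) := by
      rcases hcase1 with hpar | hr
      · exfalso
        rw [← hpar] at hDpar
        omega
      · exact hr
    obtain ⟨a₀, ha1, ha2, ha3, ha4⟩ := nset_rank ℓ _ hrib.1
    simp only at ha4
    refine hS (sn.1 : ℕ) ⟨a₀, ⟨⟨sn.2, sn.1.isLt⟩, ha1, ha2, ?_⟩,
      ⟨⟨a, by omega⟩, sn, i, hu1, rfl, hrib.2⟩, ⟨b+1, by omega⟩, ?_⟩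
    · rw [← ha4]; exact hrib.1
    · have hπ : πn (v (⟨b+1, by omega⟩ : Fin q)) = (sn'.1 : ℕ) := by simp only [hv1]; rfl
      rw [hπ]
      exact ⟨anc_chain (strictAnc_anc hanc1) (strictAnc_anc hanc2) sn.2 sn'.2 hlt, by omega⟩
  · -- same node: two vertices of the same clique on Q, contradiction
    have hss : sn = sn' := Subtype.ext (Fin.ext
      (anc_depth_eq (strictAnc_anc hanc1) (strictAnc_anc hanc2) sn.2 sn'.2 heqd))
    by_cases hii : i = i'
    · have hveq : v ⟨a, by omega⟩ = v ⟨b+1, by omega⟩ := by simp only [hu1, hv1, hss, hii]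
      have h2 := congrArg Fin.val (hinj hveq)
      simp only at h2
      omega
    · have hadj2 : (Gl C).Adj (v ⟨a, by omega⟩) (v ⟨b+1, by omega⟩) := by
        simp only [hu1, hv1, ← hss]
        rw [Gl, SimpleGraph.fromRel_adj]
        exact ⟨by simp [hii], Or.inl (Or.inl ⟨rfl, hii⟩)⟩
      exact hind ⟨a, by omega⟩ ⟨b+1, by omega⟩ (show a + 1 < b + 1 by omega) hadj2
  · -- sn' is a rib source, sn an internal node of its subtree
    have hrib : (nodeDepth (sn'.1 : ℕ), nodeDepth (tn.1 : ℕ)) ∈ Nset ℓ ∧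
        i' ≠ topIdx C.toBUChoices (sn'.1 : ℕ) := by
      rcases hcase2 with hpar | hr
      · exfalso
        rw [hpe] at hpar
        rw [← hpar] at hDpar
        omega
      · rw [hpe] at hr
        exact hr
    obtain ⟨a₀, ha1, ha2, ha3, ha4⟩ := nset_rank ℓ _ hrib.1
    simp only at ha4
    refine hS (sn'.1 : ℕ) ⟨a₀, ⟨⟨sn'.2, sn'.1.isLt⟩, ha1, ha2, ?_⟩,
      ⟨⟨b+1, by omega⟩, sn', i', hv1, rfl, hrib.2⟩, ⟨a, by omega⟩, ?_⟩
    · rw [← ha4]; exact hrib.1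
    · have hπ : πn (v (⟨a, by omega⟩ : Fin q)) = (sn.1 : ℕ) := by simp only [hu1]; rfl
      rw [hπ]
      exact ⟨anc_chain (strictAnc_anc hanc2) (strictAnc_anc hanc1) sn'.2 sn.2 hgt, by omega⟩

end Peak

/-- For every `ℓ ≥ 1`, every induced path `Q = v₁…v_q` of `G_ℓ` such that no
source of `B_ℓ` is `Q`-special is bimonotone: for some index `k`, the depths are
non-increasing from `v₁` to `v_k` and non-decreasing from `v_k` to `v_q`. -/
theorem statement13 :
    ∀ ℓ : ℕ, 1 ≤ ℓ → ∀ C : GChoices ℓ, ∀ q : ℕ, 1 ≤ q →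
      ∀ v : Fin q → BV (h ℓ), IsInducedPathSeq (Gl C) v →
        (∀ s : ℕ, ¬ QSpecial C v s) →
        ∃ k : Fin q,
          (∀ i j : Fin q, i ≤ j → j ≤ k → vDepth (v j) ≤ vDepth (v i)) ∧
          (∀ i j : Fin q, k ≤ i → i ≤ j → vDepth (v i) ≤ vDepth (v j)) := by
  intro ℓ hℓ C q hq v hQ hS
  classical
  let d : ℕ → ℕ := fun n => vDepth (v ⟨min n (q-1), by omega⟩)
  have hdn : ∀ (n : ℕ) (hn : n < q), d n = vDepth (v ⟨n, hn⟩) := by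
    intro n hn
    have hm : (⟨min n (q-1), by omega⟩ : Fin q) = ⟨n, hn⟩ := by
      apply Fin.ext
      show min n (q-1) = n
      omega
    exact congrArg (fun x => vDepth (v x)) hm
  let Up : ℕ → Prop := fun a => a + 1 < q ∧ d a < d (a+1)
  let Down : ℕ → Prop := fun b => b + 1 < q ∧ d (b+1) < d b
  by_cases hex : ∃ b, Down b ∧ ∃ a, Up a ∧ a < b
  · -- a peak exists: contradiction via no_peak
    exfalso
    obtain ⟨hdown0, a1, hup1, ha1b⟩ := Nat.find_spec hex
    set b0 := Nat.find hex with hb0def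
    have hb0q : b0 + 1 < q := hdown0.1
    have ha1le : a1 ≤ b0 - 1 := by omega
    have hupa0 : Up (Nat.findGreatest Up (b0-1)) := Nat.findGreatest_spec ha1le hup1
    set a0 := Nat.findGreatest Up (b0-1) with ha0def
    have ha0le : a0 ≤ b0 - 1 := Nat.findGreatest_le (b0-1)
    have hflat : ∀ c, a0 < c → c < b0 → d c = d (c+1) := by
      intro c h1 h2
      have hcq : c + 1 < q := by omega
      by_contra hne
      rcases Nat.lt_or_ge (d c) (d (c+1)) with hlt | hge
      · exact Nat.findGreatest_is_greatest (show a0 < c from h1)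
          (show c ≤ b0 - 1 by omega) ⟨hcq, hlt⟩
      · have hdc : Down c := ⟨hcq, by omega⟩
        exact Nat.find_min hex (show c < b0 from h2) ⟨hdc, a0, hupa0, h1⟩
    refine no_peak C v hQ hS (show a0 < b0 by omega) hb0q ?_ ?_ ?_
    · calc vDepth (v ⟨a0, by omega⟩) = d a0 := (hdn a0 (by omega)).symm
        _ < d (a0+1) := hupa0.2
        _ = vDepth (v ⟨a0+1, by omega⟩) := hdn (a0+1) (by omega)
    · calc vDepth (v ⟨b0+1, by omega⟩) = d (b0+1) := (hdn (b0+1) (by omega)).symm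
        _ < d b0 := hdown0.2
        _ = vDepth (v ⟨b0, by omega⟩) := hdn b0 (by omega)
    · intro c hca hcb
      calc vDepth (v ⟨c, by omega⟩) = d c := (hdn c (by omega)).symm
        _ = d (c+1) := hflat c hca hcb
        _ = vDepth (v ⟨c+1, by omega⟩) := hdn (c+1) (by omega)
  · -- no peak: build the valley index
    have H : ∀ b a, Down b → Up a → b ≤ a := by
      intro b a hdb hua
      by_contra hc
      exact hex ⟨b, hdb, a, hua, by omega⟩
    have main : ∀ kn : ℕ, kn < q →
        (∀ c, c + 1 ≤ kn → d (c+1) ≤ d c) →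
        (∀ c, kn ≤ c → c + 1 < q → d c ≤ d (c+1)) →
        ∃ k : Fin q, (∀ i j : Fin q, i ≤ j → j ≤ k → vDepth (v j) ≤ vDepth (v i)) ∧
          (∀ i j : Fin q, k ≤ i → i ≤ j → vDepth (v i) ≤ vDepth (v j)) := by
      intro kn hknq c1 c2
      have mono1 : ∀ m n : ℕ, m ≤ n → n ≤ kn → d n ≤ d m := by
        intro m n hmn
        induction n, hmn using Nat.le_induction with
        | base => intro _; exact le_refl _
        | succ p hp ih => intro hpk; exact le_trans (c1 p hpk) (ih (by omega))
      have mono2 : ∀ m n : ℕ, m ≤ n → kn ≤ m → n < q → d m ≤ d n := by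
        intro m n hmn
        induction n, hmn using Nat.le_induction with
        | base => intro _ _; exact le_refl _
        | succ p hp ih => intro hkm hpq; exact le_trans (ih hkm (by omega)) (c2 p (by omega) hpq)
      refine ⟨⟨kn, hknq⟩, ?_, ?_⟩
      · intro i j hij hjk
        calc vDepth (v j) = d j.1 := (hdn j.1 j.2).symm
          _ ≤ d i.1 := mono1 i.1 j.1 hij hjk
          _ = vDepth (v i) := hdn i.1 i.2
      · intro i j hki hij
        calc vDepth (v i) = d i.1 := (hdn i.1 i.2).symm
          _ ≤ d j.1 := mono2 i.1 j.1 hij hki j.2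
          _ = vDepth (v j) := hdn j.1 j.2
    by_cases hdex : ∃ b, Down b
    · obtain ⟨b1, hb1⟩ := hdex
      have hg : Down (Nat.findGreatest Down (q-1)) :=
        Nat.findGreatest_spec (show b1 ≤ q - 1 by have := hb1.1; omega) hb1
      set g := Nat.findGreatest Down (q-1) with hgdef
      have hgq : g + 1 < q := hg.1
      refine main (g+1) (by omega) ?_ ?_
      · intro c hc
        by_contra hcon
        have hup : Up c := ⟨by omega, by omega⟩
        have hle := H g c hg hup
        have hcg : c = g := by omega
        rw [hcg] at hup
        have := hg.2
        have := hup.2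
        omega
      · intro c hc hcq
        by_contra hcon
        have hdc : Down c := ⟨hcq, by omega⟩
        have := Nat.le_findGreatest (show c ≤ q - 1 by omega) hdc
        omega
    · refine main 0 (by omega) (fun c hc => absurd hc (by omega)) ?_
      intro c _ hcq
      by_contra hcon
      exact hdex ⟨c, hcq, by omega⟩

end PaperDefs
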